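/- arXiv:1609.03690 — 5 statements merged into one kernel-verified Lean document; each statement's English description precedes it below -/
import Mathlib

section
/- Let G be a finite group, H a subgroup of G of index 2, and x an element of G not in H. Let φ : H → (Fin n → ZMod 2) be a Gray map. Define φ̂ : G → (Fin (2n) → ZMod 2) by φ̂(g) = (φ(g) | φ(g)) if g ∈ H, and φ̂(g) = (φ(x⁻¹g) | φ(x⁻¹g) + 𝟏) if g ∉ H, where 𝟏 is the all-ones vector of length n and ( · | · ) denotes concatenation. Then for all g ∈ G, w_H(φ̂(g)) = w_H(φ̂(g⁻¹)). -/
/-!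
On `H` both halves of `φ̂ g` are `φ g`, and `w_H(φ g⁻¹) = w_H(φ g)` is the symmetry of the
Gray metric `d_φ(g, 1) = d_φ(1, g)`. Off `H`, index two puts `x⁻¹ g` and `x⁻¹ g⁻¹` in `H`, and
over `ZMod 2` exactly one of `u i`, `u i + 1` is nonzero, so `w_H(u | u + 𝟏) = n` for every `u`:
both sides equal `n`.
-/

/-- A map `φ : G → (Fin n → ZMod 2)` is a Gray map if `d_φ(a,b) = w_H(φ(a b⁻¹))` is a
metric on `G` and moreover `d_φ(a,b) = d_H(φ a, φ b)` for all `a b`. -/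
def IsGrayMap {G : Type*} [Group G] {n : ℕ} (φ : G → (Fin n → ZMod 2)) : Prop :=
  (∀ a b : G, hammingNorm (φ (a * b⁻¹)) = 0 ↔ a = b) ∧
  (∀ a b : G, hammingNorm (φ (a * b⁻¹)) = hammingNorm (φ (b * a⁻¹))) ∧
  (∀ a b c : G, hammingNorm (φ (a * c⁻¹)) ≤
      hammingNorm (φ (a * b⁻¹)) + hammingNorm (φ (b * c⁻¹))) ∧
  (∀ a b : G, hammingNorm (φ (a * b⁻¹)) = hammingDist (φ a) (φ b))

open Finset

section Hamming

variable {β : Type*} [Zero β] [DecidableEq β]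

theorem hammingNorm_eq_sum_ite {ι : Type*} [Fintype ι] (x : ι → β) :
    hammingNorm x = ∑ i, if x i ≠ 0 then 1 else 0 := by
  rw [hammingNorm, card_filter]

theorem hammingNorm_append {m n : ℕ} (u : Fin m → β) (v : Fin n → β) :
    hammingNorm (Fin.append u v) = hammingNorm u + hammingNorm v := by
  simp only [hammingNorm_eq_sum_ite, Fin.sum_univ_add, Fin.append_left, Fin.append_right]

theorem hammingNorm_append_comp_cast {p m n : ℕ} (h : p = m + n) (u : Fin m → β)
    (v : Fin n → β) :
    hammingNorm (fun i : Fin p => Fin.append u v (Fin.cast h i)) =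
      hammingNorm u + hammingNorm v := by
  subst h
  exact hammingNorm_append u v

end Hamming

theorem hammingNorm_add_hammingNorm_add_one {ι : Type*} [Fintype ι] (u : ι → ZMod 2) :
    hammingNorm u + hammingNorm (u + 1) = Fintype.card ι := by
  have hflip : ∀ a : ZMod 2, a + 1 ≠ 0 ↔ ¬a ≠ 0 := by decide
  simp only [hammingNorm, Pi.add_apply, Pi.one_apply, hflip]
  exact card_filter_add_card_filter_not _

theorem IsGrayMap.hammingNorm_inv {G : Type*} [Group G] {n : ℕ} {φ : G → (Fin n → ZMod 2)}
    (hφ : IsGrayMap φ) (a : G) : hammingNorm (φ a⁻¹) = hammingNorm (φ a) := by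
  simpa using (hφ.2.1 a 1).symm

theorem Subgroup.inv_mul_mem_of_index_two {G : Type*} [Group G] {H : Subgroup G}
    (hH : H.index = 2) {a b : G} (ha : a ∉ H) (hb : b ∉ H) : a⁻¹ * b ∈ H := by
  rw [mul_mem_iff_of_index_two hH, inv_mem_iff]
  exact iff_of_false ha hb

theorem stmt1_general {G : Type*} [Group G] (H : Subgroup G) (hH : H.index = 2)
    (x : G) (hx : x ∉ H) {n : ℕ} (φ : H → (Fin n → ZMod 2)) (hφ : IsGrayMap φ)
    (φhat : G → (Fin (2 * n) → ZMod 2))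
    (hmem : ∀ (g : G) (hg : g ∈ H),
      φhat g = fun i => Fin.append (φ ⟨g, hg⟩) (φ ⟨g, hg⟩) (Fin.cast (two_mul n) i))
    (hnmem : ∀ (g : G), g ∉ H → ∀ (hg : x⁻¹ * g ∈ H),
      φhat g = fun i =>
        Fin.append (φ ⟨x⁻¹ * g, hg⟩) (φ ⟨x⁻¹ * g, hg⟩ + 1) (Fin.cast (two_mul n) i)) :
    ∀ g : G, hammingNorm (φhat g) = hammingNorm (φhat g⁻¹) := by
  intro g
  by_cases hg : g ∈ H
  · rw [hmem g hg, hmem g⁻¹ (inv_mem hg), hammingNorm_append_comp_cast,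
      hammingNorm_append_comp_cast, ← hφ.hammingNorm_inv ⟨g, hg⟩]
    rfl
  · have hg' : g⁻¹ ∉ H := by rwa [inv_mem_iff]
    rw [hnmem g hg (H.inv_mul_mem_of_index_two hH hx hg),
      hnmem g⁻¹ hg' (H.inv_mul_mem_of_index_two hH hx hg'),
      hammingNorm_append_comp_cast, hammingNorm_append_comp_cast,
      hammingNorm_add_hammingNorm_add_one, hammingNorm_add_hammingNorm_add_one]

/-- Lemma 2: for the Type 1 map `φ̂`, `w_H(φ̂ g) = w_H(φ̂ g⁻¹)` for all `g`. -/
theorem stmt1 {G : Type*} [Group G] [Finite G] (H : Subgroup G) (hH : H.index = 2)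
    (x : G) (hx : x ∉ H) {n : ℕ} (φ : H → (Fin n → ZMod 2)) (hφ : IsGrayMap φ)
    (φhat : G → (Fin (2 * n) → ZMod 2))
    (hmem : ∀ (g : G) (hg : g ∈ H),
      φhat g = fun i => Fin.append (φ ⟨g, hg⟩) (φ ⟨g, hg⟩) (Fin.cast (two_mul n) i))
    (hnmem : ∀ (g : G), g ∉ H → ∀ (hg : x⁻¹ * g ∈ H),
      φhat g = fun i =>
        Fin.append (φ ⟨x⁻¹ * g, hg⟩) (φ ⟨x⁻¹ * g, hg⟩ + 1) (Fin.cast (two_mul n) i)) :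
    ∀ g : G, hammingNorm (φhat g) = hammingNorm (φhat g⁻¹) :=
  stmt1_general H hH x hx φ hφ φhat hmem hnmem
end

section
/- The map φ : ZMod 8 → (Fin 4 → ZMod 2) defined by φ(0) = 0000, φ(1) = 0011, φ(2) = 0101, φ(3) = 0110, φ(4) = 1111, φ(5) = 1100, φ(6) = 1010, φ(7) = 1001 is a Gray map on the cyclic group C₈ = ZMod 8. -/
/-!
Condition (ii) makes `d_φ` the pull-back of the Hamming metric along `φ`, so for an injective `φ`
it is automatically a metric. For the map on `C₈`, `φ (x + 4)` is the complement of `φ x` and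
every `φ x` has even weight, so `d_H(φ a, φ b)` is `0`, `4` or `2` according as `a - b` is `0`,
`4` or neither; this is also `w_H(φ (a - b))`.
-/

/-- A map `φ : G → (Fin n → ZMod 2)` on an additive group is a Gray map if
`d_φ(a,b) = w_H(φ (a - b))` is a metric on `G` and `d_φ(a,b) = d_H(φ a, φ b)`. -/
def IsAddGrayMap {G : Type*} [AddGroup G] {n : ℕ} (φ : G → (Fin n → ZMod 2)) : Prop :=
  (∀ a b : G, hammingNorm (φ (a - b)) = 0 ↔ a = b) ∧
  (∀ a b : G, hammingNorm (φ (a - b)) = hammingNorm (φ (b - a))) ∧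
  (∀ a b c : G, hammingNorm (φ (a - c)) ≤
      hammingNorm (φ (a - b)) + hammingNorm (φ (b - c))) ∧
  (∀ a b : G, hammingNorm (φ (a - b)) = hammingDist (φ a) (φ b))

/-- The Gray map on `C₈ = ZMod 8`: `0 ↦ 0000, 1 ↦ 0011, 2 ↦ 0101, 3 ↦ 0110,
4 ↦ 1111, 5 ↦ 1100, 6 ↦ 1010, 7 ↦ 1001`. -/
def phiC8 (i : ZMod 8) : Fin 4 → ZMod 2 :=
  if i = 0 then ![0, 0, 0, 0] else if i = 1 then ![0, 0, 1, 1]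
  else if i = 2 then ![0, 1, 0, 1] else if i = 3 then ![0, 1, 1, 0]
  else if i = 4 then ![1, 1, 1, 1] else if i = 5 then ![1, 1, 0, 0]
  else if i = 6 then ![1, 0, 1, 0] else ![1, 0, 0, 1]

theorem IsAddGrayMap.of_injective {G : Type*} [AddGroup G] {n : ℕ} {φ : G → Fin n → ZMod 2}
    (hφ : Function.Injective φ)
    (hdist : ∀ a b : G, hammingNorm (φ (a - b)) = hammingDist (φ a) (φ b)) :
    IsAddGrayMap φ := by
  refine ⟨fun a b => ?_, fun a b => ?_, fun a b c => ?_, hdist⟩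
  · rw [hdist, hammingDist_eq_zero, hφ.eq_iff]
  · rw [hdist, hdist, hammingDist_comm]
  · simpa only [hdist] using hammingDist_triangle (φ a) (φ b) (φ c)

def c8GrayWeight (x : ZMod 8) : ℕ :=
  if x = 0 then 0 else if x = 4 then 4 else 2

theorem phiC8_injective : Function.Injective phiC8 := by
  unfold phiC8; decide

theorem hammingNorm_phiC8 (x : ZMod 8) : hammingNorm (phiC8 x) = c8GrayWeight x := by
  revert x; unfold phiC8 c8GrayWeight; decide

theorem hammingDist_phiC8 (a b : ZMod 8) :
    hammingDist (phiC8 a) (phiC8 b) = c8GrayWeight (a - b) := by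
  revert a b; unfold phiC8 c8GrayWeight; decide

/-- Example 3.1: `φ` is a Gray map on `C₈ = ZMod 8`. -/
theorem stmt8 : IsAddGrayMap phiC8 :=
  IsAddGrayMap.of_injective phiC8_injective fun a b => by
    rw [hammingNorm_phiC8, hammingDist_phiC8]
end

section
/- Let G be a group of order 8 and let φ : G → (Fin 3 → ZMod 2) be an injective map such that w_H(φ(g)) = 0 if and only if g = e, and w_H(φ(g)) = w_H(φ(g⁻¹)) for all g ∈ G. Then G contains at least 3 elements of order 2. -/
/-!
Since `φ` is a bijection onto `(ZMod 2)³`, the elements of `G` of weight `k` are as many as the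
vectors of weight `k`, namely `choose 3 k`, which is odd for `k = 1, 2, 3`. Inversion preserves
the weight, so it is an involution of each of these three level sets, and an involution of a set
of odd size has a fixed point. This gives self-inverse elements of weights `1`, `2`, `3`: three
distinct elements of order `2`.
-/

theorem Function.Involutive.exists_fixedPoint_of_odd_card {α : Type*} [Fintype α] {f : α → α}
    (hf : Function.Involutive f) (hα : Odd (Fintype.card α)) : ∃ a, f a = a :=
  Equiv.Perm.exists_fixed_point_of_prime (n := 1) hα.not_two_dvd_nat (σ := hf.toPerm f)
    (Equiv.ext fun a => hf a)

theorem exists_inv_eq_self_of_odd_card {α : Type*} [InvolutiveInv α] (p : α → Prop)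
    [Fintype {a // p a}] (hp : ∀ a, p a⁻¹ ↔ p a) (h : Odd (Fintype.card {a // p a})) :
    ∃ a, p a ∧ a⁻¹ = a := by
  have hinv : Function.Involutive fun a : {a // p a} => (⟨a.1⁻¹, (hp _).2 a.2⟩ : {a // p a}) :=
    fun a => Subtype.ext (inv_inv a.1)
  obtain ⟨⟨a, ha⟩, hfix⟩ := hinv.exists_fixedPoint_of_odd_card h
  exact ⟨a, ha, congrArg Subtype.val hfix⟩

theorem odd_card_hammingNorm_eq (k : Fin 4) :
    Odd (Fintype.card {v : Fin 3 → ZMod 2 // hammingNorm v = k}) := by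
  revert k; decide

/-- if `G` has order 8 and `φ : G → (Fin 3 → ZMod 2)` is injective with
`w_H(φ g) = 0 ↔ g = e` and `w_H(φ g) = w_H(φ g⁻¹)` for all `g`, then `G` contains at
least 3 elements of order 2. -/
theorem stmt11 {G : Type*} [Group G] [Fintype G] (hG : Fintype.card G = 8)
    (φ : G → (Fin 3 → ZMod 2)) (hinj : Function.Injective φ)
    (h0 : ∀ g : G, hammingNorm (φ g) = 0 ↔ g = 1)
    (hinv : ∀ g : G, hammingNorm (φ g) = hammingNorm (φ g⁻¹)) :
    3 ≤ {g : G | g ≠ 1 ∧ g * g = 1}.ncard := by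
  have hφ : Function.Bijective φ :=
    (Fintype.bijective_iff_injective_and_card φ).2 ⟨hinj, by simp [hG]⟩
  have hlevel (k : Fin 3) : ∃ g : G, hammingNorm (φ g) = k.succ ∧ g⁻¹ = g := by
    refine exists_inv_eq_self_of_odd_card _ (fun g => by rw [← hinv]) ?_
    convert odd_card_hammingNorm_eq k.succ using 1
    exact Fintype.card_congr ((Equiv.ofBijective φ hφ).subtypeEquiv fun _ => Iff.rfl)
  choose g hgk hgi using hlevel
  have hg_inj : Function.Injective g := fun k l hkl =>
    Fin.succ_injective _ (Fin.ext (by rw [← hgk, ← hgk, hkl]))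
  have hg_mem : Set.range g ⊆ {g : G | g ≠ 1 ∧ g * g = 1} := by
    rintro _ ⟨k, rfl⟩
    refine ⟨fun h => ?_, inv_eq_iff_mul_eq_one.mp (hgi k)⟩
    simpa [h, (h0 1).2 rfl] using (hgk k).symm
  calc 3 = (Set.range g).ncard := by simp [Set.ncard_range_of_injective hg_inj]
    _ ≤ _ := Set.ncard_le_ncard hg_mem
end

section
/- There is no Gray map from the cyclic group C₈ = ZMod 8 to (Fin 3 → ZMod 2); that is, no map φ : ZMod 8 → (Fin 3 → ZMod 2) satisfies the Gray map conditions. -/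
/-!
A Gray map `φ` is injective, hence a bijection `ZMod 8 ≃ (Fin 3 → ZMod 2)` since both sides have
eight elements. Let `x` be the point sent to the antipode `φ 0 + 1` of `φ 0`. Any two vertices
`t, u` of the cube satisfy `d(t, u) + d(t, u + 1) = 3`, and `φ (-x)` is also at distance `3` from `φ 0`,
so `-x = x` and therefore `x = 0` or `x = 4`; in either case `x = y + y` for some `y`. Then
`w(φ y) + w(φ (-y)) = 3`, while `w(φ (-y)) = w(φ y)` by symmetry, a parity contradiction.
-/

open Finset

lemma ZMod.two_ne_iff_eq_add_one {a b : ZMod 2} : a ≠ b ↔ b = a + 1 := by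
  revert a b; decide

lemma ZMod.two_ne_add_one_iff {a b : ZMod 2} : a ≠ b + 1 ↔ a = b := by
  revert a b; decide

section Cube

variable {n : ℕ}

lemma hammingDist_eq_dim_iff {u v : Fin n → ZMod 2} : hammingDist u v = n ↔ v = u + 1 := by
  have hcard := card_filter_eq_iff (s := univ) (p := fun i => u i ≠ v i)
  rw [card_univ, Fintype.card_fin] at hcard
  rw [hammingDist, hcard, funext_iff]
  simp only [mem_univ, true_implies, ZMod.two_ne_iff_eq_add_one, Pi.add_apply, Pi.one_apply]

lemma hammingDist_add_hammingDist_add_one (t u : Fin n → ZMod 2) :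
    hammingDist t u + hammingDist t (u + 1) = n := by
  have hcoord : ∀ i, t i ≠ (u + 1) i ↔ ¬ t i ≠ u i := fun i => by
    rw [Pi.add_apply, Pi.one_apply, ZMod.two_ne_add_one_iff, not_not]
  simp only [hammingDist, hcoord]
  rw [card_filter_add_card_filter_not, card_univ, Fintype.card_fin]

end Cube

namespace IsAddGrayMap

variable {G : Type*} [AddGroup G] {n : ℕ} {φ : G → (Fin n → ZMod 2)}

lemma hammingDist_apply_zero (hφ : IsAddGrayMap φ) (a : G) :
    hammingDist (φ a) (φ 0) = hammingNorm (φ a) := by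
  rw [← hφ.2.2.2, sub_zero]

lemma hammingNorm_neg (hφ : IsAddGrayMap φ) (a : G) :
    hammingNorm (φ (-a)) = hammingNorm (φ a) := by
  simpa using hφ.2.1 0 a

lemma injective (hφ : IsAddGrayMap φ) : Function.Injective φ := fun a b hab =>
  (hφ.1 a b).1 (by rw [hφ.2.2.2, hab, hammingDist_self])

lemma exists_neg_eq_self_hammingNorm_add [Fintype G] (hφ : IsAddGrayMap φ)
    (hcard : Fintype.card G = 2 ^ n) :
    ∃ x : G, -x = x ∧ ∀ t, hammingNorm (φ t) + hammingNorm (φ (t - x)) = n := by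
  have hbij : Function.Bijective φ :=
    (Fintype.bijective_iff_injective_and_card φ).2 ⟨hφ.injective, by simp [hcard]⟩
  obtain ⟨x, hx⟩ := hbij.2 (φ 0 + 1)
  have hsplit : ∀ t, hammingNorm (φ t) + hammingNorm (φ (t - x)) = n := fun t => by
    rw [hφ.2.2.2, ← hφ.hammingDist_apply_zero, hx, hammingDist_add_hammingDist_add_one]
  refine ⟨x, hφ.injective ?_, hsplit⟩
  rw [hx, ← hammingDist_eq_dim_iff, hammingDist_comm, hφ.hammingDist_apply_zero,
    hφ.hammingNorm_neg, ← hφ.hammingDist_apply_zero, hammingDist_comm,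
    hammingDist_eq_dim_iff.2 hx]

end IsAddGrayMap

/-- there is no Gray map from `C₈ = ZMod 8` to `Fin 3 → ZMod 2`. -/
theorem stmt12 : ∀ φ : ZMod 8 → (Fin 3 → ZMod 2), ¬ IsAddGrayMap φ := by
  intro φ hφ
  obtain ⟨x, hx, hsplit⟩ := hφ.exists_neg_eq_self_hammingNorm_add (by decide)
  obtain ⟨y, rfl⟩ := (by decide : ∀ x : ZMod 8, -x = x → ∃ y, y + y = x) x hx
  have h := hsplit y
  rw [show y - (y + y) = -y by abel, hφ.hammingNorm_neg] at h
  omega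
end

section
/- There is no Gray map from the quaternion group Q₈ (QuaternionGroup 2 in Mathlib) to (Fin 3 → ZMod 2); that is, no map φ : Q₈ → (Fin 3 → ZMod 2) satisfies the Gray map conditions. -/
/-!
The parity of the Hamming weight of a Gray map `φ` is a homomorphism to `ZMod 2`, because
`d_H(u, v) ≡ w_H(u) + w_H(v) (mod 2)`; in particular it vanishes on squares. A Gray map is
injective, so for `|G| = 2 ^ n` it is onto `(ZMod 2)ⁿ` and some `g` maps to the all-ones vector,
the only vector of weight `n`. Since `w_H(φ g⁻¹) = w_H(φ g)`, also `φ g⁻¹` is that vector, so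
`g² = 1`. In `Q₈` every such `g` is a square, so `w_H(φ g) = 3` would have to be even.
-/

open Finset

theorem natCast_hammingDist_zmod_two {ι : Type*} [Fintype ι] (u v : ι → ZMod 2) :
    (hammingDist u v : ZMod 2) = hammingNorm u + hammingNorm v := by
  have hcoord : ∀ x y : ZMod 2, (if x ≠ y then 1 else 0 : ZMod 2) =
      (if x ≠ 0 then 1 else 0) + (if y ≠ 0 then 1 else 0) := by decide
  rw [hammingDist, hammingNorm, hammingNorm]
  push_cast [natCast_card_filter]
  rw [← sum_add_distrib]
  exact sum_congr rfl fun i _ => hcoord (u i) (v i)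

theorem hammingNorm_eq_card_zmod_two {ι : Type*} [Fintype ι] {v : ι → ZMod 2} :
    hammingNorm v = Fintype.card ι ↔ v = 1 := by
  rw [hammingNorm, ← card_univ, card_filter_eq_iff, funext_iff]
  simp only [mem_univ, true_implies, Pi.one_apply]
  exact forall_congr' fun i => by generalize v i = x; revert x; decide

theorem ZMod.eq_zero_or_eq_of_add_self_eq_zero {n : ℕ} [NeZero n] {i : ZMod (2 * n)}
    (hi : i + i = 0) : i = 0 ∨ i = n := by
  have hdvd : 2 * n ∣ 2 * i.val := by
    rw [← ZMod.natCast_eq_zero_iff]; push_cast [ZMod.natCast_zmod_val]; linear_combination hi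
  obtain ⟨m, hm⟩ := Nat.dvd_of_mul_dvd_mul_left two_pos hdvd
  have hm2 : m < 2 := by
    have := ZMod.val_lt i
    nlinarith [NeZero.pos n]
  rw [← ZMod.natCast_zmod_val i, hm]
  interval_cases m <;> simp

namespace QuaternionGroup

theorem exists_sq_eq_of_sq_eq_one {n : ℕ} [NeZero n] {g : QuaternionGroup n} (hg : g ^ 2 = 1) :
    ∃ h, g = h ^ 2 := by
  rcases g with i | i
  · rw [sq, a_mul_a, one_def, a.injEq] at hg
    rcases ZMod.eq_zero_or_eq_of_add_self_eq_zero hg with rfl | rfl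
    · exact ⟨1, by rw [one_pow, a_zero]⟩
    · exact ⟨xa 0, (xa_sq 0).symm⟩
  · rw [xa_sq, one_def, a.injEq, ZMod.natCast_eq_zero_iff] at hg
    have hpos := NeZero.pos n
    have := Nat.le_of_dvd hpos hg
    omega

end QuaternionGroup

namespace IsGrayMap

variable {G : Type*} [Group G] {n : ℕ} {φ : G → (Fin n → ZMod 2)}

theorem injective (hφ : IsGrayMap φ) : Function.Injective φ := fun a b hab =>
  (hφ.1 a b).mp (by rw [hφ.2.2.2, hab, hammingDist_self])

theorem hammingNorm_inv_s13 (hφ : IsGrayMap φ) (g : G) :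
    hammingNorm (φ g⁻¹) = hammingNorm (φ g) := by
  simpa using hφ.2.1 1 g

theorem natCast_hammingNorm_mul (hφ : IsGrayMap φ) (a b : G) :
    (hammingNorm (φ (a * b)) : ZMod 2) = hammingNorm (φ a) + hammingNorm (φ b) := by
  have hdist := hφ.2.2.2 a b⁻¹
  rw [inv_inv] at hdist
  rw [hdist, natCast_hammingDist_zmod_two, hammingNorm_inv_s13 hφ]

theorem natCast_hammingNorm_sq (hφ : IsGrayMap φ) (g : G) :
    (hammingNorm (φ (g ^ 2)) : ZMod 2) = 0 := by
  rw [sq, natCast_hammingNorm_mul hφ, CharTwo.add_self_eq_zero]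

theorem exists_sq_eq_one_hammingNorm_eq [Finite G] (hφ : IsGrayMap φ)
    (hcard : Nat.card G = 2 ^ n) :
    ∃ g : G, g ^ 2 = 1 ∧ hammingNorm (φ g) = n := by
  have hsurj : Function.Surjective φ :=
    (hφ.injective.bijective_of_nat_card_le (by simp [hcard])).2
  obtain ⟨g, hg⟩ := hsurj 1
  have hnorm : hammingNorm (φ g) = n := by
    simpa using hammingNorm_eq_card_zmod_two.mpr hg
  have hinv : g⁻¹ = g := hφ.injective <| by
    rw [hg, ← hammingNorm_eq_card_zmod_two, Fintype.card_fin, hammingNorm_inv_s13 hφ, hnorm]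
  exact ⟨g, by rw [sq, ← inv_eq_iff_mul_eq_one, hinv], hnorm⟩

end IsGrayMap

theorem not_isGrayMap_of_odd {G : Type*} [Group G] [Finite G] {n : ℕ}
    {φ : G → (Fin n → ZMod 2)} (hcard : Nat.card G = 2 ^ n) (hn : Odd n)
    (hsq : ∀ g : G, g ^ 2 = 1 → ∃ h, g = h ^ 2) : ¬ IsGrayMap φ := by
  intro hφ
  obtain ⟨g, hg, hnorm⟩ := hφ.exists_sq_eq_one_hammingNorm_eq hcard
  obtain ⟨h, rfl⟩ := hsq g hg
  have hsq_even := hφ.natCast_hammingNorm_sq h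
  rw [hnorm, ZMod.natCast_eq_zero_iff_even] at hsq_even
  exact Nat.not_even_iff_odd.mpr hn hsq_even

/-- there is no Gray map from the quaternion group
`Q₈ = QuaternionGroup 2` to `Fin 3 → ZMod 2`. -/
theorem stmt13 : ∀ φ : QuaternionGroup 2 → (Fin 3 → ZMod 2), ¬ IsGrayMap φ := fun _ =>
  not_isGrayMap_of_odd (by rw [Nat.card_eq_fintype_card, QuaternionGroup.card]; rfl) (by decide)
    fun _ => QuaternionGroup.exists_sq_eq_of_sq_eq_one
end
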